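/- Determinant identity for the posterior-linearization innovation covariance in the linear case: det Ŝ = (det R)² / det S, where Ŝ = H P̂ Hᵀ + R − H K R − (H K R)ᵀ. -/

import Mathlib

/-!
With `A = H P̄ Hᵀ` we have `S = A + R`, so `H K = A S⁻¹ = 1 - R S⁻¹`. Substituting this into
every term of `Ŝ` collapses it to `Ŝ = R S⁻¹ R` (using that `R` and `S` are symmetric), whose
determinant is `(det R)² / det S`.
-/

open Matrix

section KalmanAlgebra

variable {m n 𝕜 : Type*} [Fintype m] [DecidableEq m] [Fintype n] [Field 𝕜]
  {H : Matrix m n 𝕜} {P : Matrix n n 𝕜} {R S : Matrix m m 𝕜}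

theorem mul_kalmanGain_eq (hS : S = H * P * Hᵀ + R) (hSdet : S.det ≠ 0) :
    H * (P * Hᵀ * S⁻¹) = 1 - R * S⁻¹ := by
  have hA : H * P * Hᵀ = S - R := by rw [hS]; abel
  rw [← Matrix.mul_assoc, ← Matrix.mul_assoc, hA, Matrix.sub_mul,
    mul_nonsing_inv S hSdet.isUnit]

theorem posteriorInnovation_eq (hS : S = H * P * Hᵀ + R) (hSdet : S.det ≠ 0)
    (hP : Pᵀ = P) (hR : Rᵀ = R) {K : Matrix n m 𝕜} (hK : K = P * Hᵀ * S⁻¹) :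
    H * (P - K * H * P) * Hᵀ + R - H * K * R - (H * K * R)ᵀ = R * S⁻¹ * R := by
  have hHK : H * K = 1 - R * S⁻¹ := hK ▸ mul_kalmanGain_eq hS hSdet
  have hA : H * P * Hᵀ = S - R := by rw [hS]; abel
  have hSsymm : Sᵀ = S := by
    rw [hS, transpose_add, transpose_mul, transpose_mul, transpose_transpose, hP, hR,
      Matrix.mul_assoc]
  have hHKR : H * K * R = R - R * S⁻¹ * R := by rw [hHK]; noncomm_ring
  have hHKRT : (H * K * R)ᵀ = R - R * S⁻¹ * R := by
    rw [hHKR, transpose_sub, transpose_mul, transpose_mul, transpose_nonsing_inv, hSsymm, hR,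
      Matrix.mul_assoc]
  have hHPhatH : H * (P - K * H * P) * Hᵀ = R - R * S⁻¹ * R :=
    calc H * (P - K * H * P) * Hᵀ = (S - R) - (1 - R * S⁻¹) * (S - R) := by
          rw [← hA, ← hHK]; simp only [Matrix.sub_mul, Matrix.mul_sub, Matrix.mul_assoc]
      _ = R * (S⁻¹ * S) - R * S⁻¹ * R := by noncomm_ring
      _ = R - R * S⁻¹ * R := by rw [nonsing_inv_mul S hSdet.isUnit, Matrix.mul_one]
  rw [hHPhatH, hHKRT, hHKR]
  abel

theorem det_mul_nonsing_inv_mul (hSdet : S.det ≠ 0) :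
    (R * S⁻¹ * R).det = R.det ^ 2 / S.det := by
  rw [det_mul, det_mul, det_nonsing_inv, Ring.inverse_eq_inv']
  field_simp

end KalmanAlgebra

theorem Matrix.PosDef.mul_mul_transpose_add {m n : Type*} [Fintype m] [Fintype n]
    {P : Matrix n n ℝ} {R : Matrix m m ℝ} (hP : P.PosDef) (hR : R.PosDef) (H : Matrix m n ℝ) :
    (H * P * Hᵀ + R).PosDef := by
  have hHPH : (H * P * Hᵀ).PosSemidef := by
    simpa using hP.posSemidef.mul_mul_conjTranspose_same H
  exact Matrix.PosDef.posSemidef_add hHPH hR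

theorem Shat_det_general
    (n m : ℕ)
    (H : Matrix (Fin m) (Fin n) ℝ)
    (R : Matrix (Fin m) (Fin m) ℝ) (hR : R.PosDef)
    (Pbar : Matrix (Fin n) (Fin n) ℝ) (hPbar : Pbar.PosDef)
    (S : Matrix (Fin m) (Fin m) ℝ) (hS : S = H * Pbar * Hᵀ + R)
    (K : Matrix (Fin n) (Fin m) ℝ) (hK : K = Pbar * Hᵀ * S⁻¹)
    (Phat : Matrix (Fin n) (Fin n) ℝ) (hPhat : Phat = Pbar - K * H * Pbar)
    (Shat : Matrix (Fin m) (Fin m) ℝ)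
    (hShat : Shat = H * Phat * Hᵀ + R - H * K * R - (H * K * R)ᵀ) :
    Shat.det = R.det ^ 2 / S.det := by
  have hSdet : S.det ≠ 0 := by
    rw [hS]; exact (hPbar.mul_mul_transpose_add hR H).det_pos.ne'
  have hShat_eq : Shat = R * S⁻¹ * R := by
    rw [hShat, hPhat]
    exact posteriorInnovation_eq hS hSdet hPbar.isHermitian.eq hR.isHermitian.eq hK
  rw [hShat_eq, det_mul_nonsing_inv_mul hSdet]

/-- Determinant identity for the posterior-linearization innovation covariance in the
linear case: `det Ŝ = (det R)² / det S`. -/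
theorem Shat_det
    (n m : ℕ) (hn : 0 < n) (hm : 0 < m)
    (H : Matrix (Fin m) (Fin n) ℝ)
    (R : Matrix (Fin m) (Fin m) ℝ) (hR : R.PosDef)
    (Pbar : Matrix (Fin n) (Fin n) ℝ) (hPbar : Pbar.PosDef)
    (S : Matrix (Fin m) (Fin m) ℝ) (hS : S = H * Pbar * Hᵀ + R)
    (K : Matrix (Fin n) (Fin m) ℝ) (hK : K = Pbar * Hᵀ * S⁻¹)
    (Phat : Matrix (Fin n) (Fin n) ℝ) (hPhat : Phat = Pbar - K * H * Pbar)
    (Shat : Matrix (Fin m) (Fin m) ℝ)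
    (hShat : Shat = H * Phat * Hᵀ + R - H * K * R - (H * K * R)ᵀ) :
    Shat.det = R.det ^ 2 / S.det :=
  Shat_det_general n m H R hR Pbar hPbar S hS K hK Phat hPhat Shat hShat
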